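/- In this auction, for both γ = 4 and γ = 5 the unique efficient allocation gives each of bidders 1 through 6 his singleton bundle (bidder i receives good i for i = 1,…,6) and bidders 7 through 11 receive nothing. The VCG payment of bidder 1 equals 2 when γ = 4 and equals 1 when γ = 5; in particular, raising bidder 3's bid from 4 to 5 strictly decreases bidder 1's VCG payment. -/
import Mathlib


open Finset

/-- An allocation assigns to each of the 11 bidders a subset of the 6 goods,
pairwise disjoint. -/
def IsAlloc (x : Fin 11 → Finset (Fin 6)) : Prop :=
  ∀ i j, i ≠ j → Disjoint (x i) (x j)

/-- An allocation is efficient if it maximizes reported social welfare. -/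
def Efficient (b : Fin 11 → Finset (Fin 6) → ℝ) (x : Fin 11 → Finset (Fin 6)) : Prop :=
  IsAlloc x ∧ ∀ y, IsAlloc y → ∑ i, b i (y i) ≤ ∑ i, b i (x i)

/-- The VCG payment of bidder `i` at allocation `x`:
`max_{x'} ∑_{j≠i} b_j(x'_j) − ∑_{j≠i} b_j(x_j)`. -/
noncomputable def vcgPayment (b : Fin 11 → Finset (Fin 6) → ℝ)
    (x : Fin 11 → Finset (Fin 6)) (i : Fin 11) : ℝ :=
  sSup {w : ℝ | ∃ y, IsAlloc y ∧ w = ∑ j ∈ Finset.univ.erase i, b j (y j)} -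
    ∑ j ∈ Finset.univ.erase i, b j (x j)

/-- The bundle of interest of each single-minded bidder
(goods 1,…,6 are encoded as 0,…,5 and bidders 1,…,11 as 0,…,10). -/
def bundleOf : Fin 11 → Finset (Fin 6) :=
  ![{0}, {1}, {2}, {3}, {4}, {5}, {0, 1, 3}, {1, 2, 4}, {0, 2, 5}, {3, 4, 5}, {1, 2, 3}]

/-- The bid amounts: bidders 1–6 bid 5, 5, γ, 1, 1, 1 on their singletons;
bidders 7–11 bid 5, 5, 7, 2, 5 on their bundles. -/
def amounts (γ : ℝ) : Fin 11 → ℝ := ![5, 5, γ, 1, 1, 1, 5, 5, 7, 2, 5]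

/-- Single-minded bids: each bidder bids his amount on his bundle of interest
and 0 on every other bundle. -/
def bids (γ : ℝ) : Fin 11 → Finset (Fin 6) → ℝ := fun i K =>
  if K = bundleOf i then amounts γ i else 0

/-- The allocation giving each of bidders 1–6 his singleton bundle
(bidder i receives good i) and nothing to bidders 7–11. -/
def xstar : Fin 11 → Finset (Fin 6) := fun i =>
  if h : (i : ℕ) < 6 then {(⟨(i : ℕ), h⟩ : Fin 6)} else ∅

noncomputable def pr (γ : ℝ) : Fin 6 → ℝ := ![5, 5, γ, 1, 1, 1]

lemma xstar_eq : xstar = ![{0},{1},{2},{3},{4},{5},∅,∅,∅,∅,∅] := by decide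

lemma xstar_alloc : IsAlloc xstar := by
  rw [xstar_eq]; intro i j hij; fin_cases i <;> fin_cases j <;> revert hij <;> decide

lemma key (γ : ℝ) (q : Fin 6 → ℝ) (hq : ∀ g, 0 ≤ q g) (T : Finset (Fin 11))
    (hb : ∀ i ∈ T, amounts γ i ≤ ∑ g ∈ bundleOf i, q g)
    (y : Fin 11 → Finset (Fin 6)) (hy : IsAlloc y) :
    ∑ i ∈ T, bids γ i (y i) ≤ ∑ g, q g := by
  have h1 : ∀ i ∈ T, bids γ i (y i) ≤ ∑ g ∈ y i, q g := by
    intro i hi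
    unfold bids
    split
    · next h => rw [h]; exact hb i hi
    · exact Finset.sum_nonneg fun g _ => hq g
  calc ∑ i ∈ T, bids γ i (y i) ≤ ∑ i ∈ T, ∑ g ∈ y i, q g := Finset.sum_le_sum h1
    _ = ∑ g ∈ T.biUnion y, q g :=
        (Finset.sum_biUnion (fun i _ j _ hij => hy i j hij)).symm
    _ ≤ ∑ g, q g := Finset.sum_le_sum_of_subset_of_nonneg (Finset.subset_univ _)
        (fun g _ _ => hq g)

lemma sum_pr (γ : ℝ) : ∑ g, pr γ g = 13 + γ := by
  simp [pr, Fin.sum_univ_six, show ((![5,5,γ,1,1,1] : Fin 6 → ℝ)) 5 = 1 from rfl]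
  ring

lemma welfare_xstar (γ : ℝ) : ∑ i, bids γ i (xstar i) = 13 + γ := by
  rw [xstar_eq]
  simp [bids, bundleOf, amounts, Fin.sum_univ_succ]
  norm_num [show (∅:Finset (Fin 6)) ≠ {0,1,3} by decide, show (∅:Finset (Fin 6)) ≠ {1,2,4} by decide,
    show (∅:Finset (Fin 6)) ≠ {0,2,5} by decide, show (∅:Finset (Fin 6)) ≠ {3,4,5} by decide,
    show (∅:Finset (Fin 6)) ≠ {1,2,3} by decide]
  ring

@[simp] lemma amounts_0 (γ : ℝ) : amounts γ 0 = 5 := rfl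
@[simp] lemma bundleOf_0 : bundleOf 0 = {0} := rfl
@[simp] lemma amounts_1 (γ : ℝ) : amounts γ 1 = 5 := rfl
@[simp] lemma bundleOf_1 : bundleOf 1 = {1} := rfl
@[simp] lemma amounts_2 (γ : ℝ) : amounts γ 2 = γ := rfl
@[simp] lemma bundleOf_2 : bundleOf 2 = {2} := rfl
@[simp] lemma amounts_3 (γ : ℝ) : amounts γ 3 = 1 := rfl
@[simp] lemma bundleOf_3 : bundleOf 3 = {3} := rfl
@[simp] lemma amounts_4 (γ : ℝ) : amounts γ 4 = 1 := rfl
@[simp] lemma bundleOf_4 : bundleOf 4 = {4} := rfl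
@[simp] lemma amounts_5 (γ : ℝ) : amounts γ 5 = 1 := rfl
@[simp] lemma bundleOf_5 : bundleOf 5 = {5} := rfl
@[simp] lemma amounts_6 (γ : ℝ) : amounts γ 6 = 5 := rfl
@[simp] lemma bundleOf_6 : bundleOf 6 = {0,1,3} := rfl
@[simp] lemma amounts_7 (γ : ℝ) : amounts γ 7 = 5 := rfl
@[simp] lemma bundleOf_7 : bundleOf 7 = {1,2,4} := rfl
@[simp] lemma amounts_8 (γ : ℝ) : amounts γ 8 = 7 := rfl
@[simp] lemma bundleOf_8 : bundleOf 8 = {0,2,5} := rfl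
@[simp] lemma amounts_9 (γ : ℝ) : amounts γ 9 = 2 := rfl
@[simp] lemma bundleOf_9 : bundleOf 9 = {3,4,5} := rfl
@[simp] lemma amounts_10 (γ : ℝ) : amounts γ 10 = 5 := rfl
@[simp] lemma bundleOf_10 : bundleOf 10 = {1,2,3} := rfl
@[simp] lemma pr_0 (γ : ℝ) : pr γ 0 = 5 := rfl
@[simp] lemma pr_1 (γ : ℝ) : pr γ 1 = 5 := rfl
@[simp] lemma pr_2 (γ : ℝ) : pr γ 2 = γ := rfl
@[simp] lemma pr_3 (γ : ℝ) : pr γ 3 = 1 := rfl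
@[simp] lemma pr_4 (γ : ℝ) : pr γ 4 = 1 := rfl
@[simp] lemma pr_5 (γ : ℝ) : pr γ 5 = 1 := rfl

lemma pr_pos (γ : ℝ) (h1 : 1 < γ) : ∀ g, 0 < pr γ g := by
  intro g; fin_cases g <;> simp <;> linarith

lemma hb_pr (γ : ℝ) (h1 : 1 ≤ γ) : ∀ i, amounts γ i ≤ ∑ g ∈ bundleOf i, pr γ g := by
  intro i
  fin_cases i <;> simp <;> linarith

lemma strict_pr (γ : ℝ) (h1 : 1 < γ) :
    ∀ i : Fin 11, 6 ≤ (i : ℕ) → amounts γ i < ∑ g ∈ bundleOf i, pr γ g := by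
  intro i hi
  fin_cases i <;> simp_all <;> linarith

lemma bundle_lt6 : ∀ (i : Fin 11) (h : (i : ℕ) < 6), bundleOf i = {⟨(i : ℕ), h⟩} := by
  intro i h
  fin_cases i <;> first | rfl | (exact absurd h (by norm_num))

lemma eff (γ : ℝ) (h1 : 1 < γ) : Efficient (bids γ) xstar := by
  refine ⟨xstar_alloc, fun y hy => ?_⟩
  rw [welfare_xstar, ← sum_pr γ]
  exact key γ (pr γ) (fun g => (pr_pos γ h1 g).le) Finset.univ
    (fun i _ => hb_pr γ h1.le i) y hy

lemma uniq (γ : ℝ) (h1 : 1 < γ) (x : Fin 11 → Finset (Fin 6))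
    (hx : Efficient (bids γ) x) : x = xstar := by
  have hpos := pr_pos γ h1
  have hnn : ∀ g, 0 ≤ pr γ g := fun g => (hpos g).le
  have halloc := hx.1
  have hub : ∀ i ∈ (Finset.univ : Finset (Fin 11)), bids γ i (x i) ≤ ∑ g ∈ x i, pr γ g := by
    intro i _
    unfold bids; split
    · next h => rw [h]; exact hb_pr γ h1.le i
    · exact Finset.sum_nonneg fun g _ => hnn g
  have e2 : ∑ i, ∑ g ∈ x i, pr γ g = ∑ g ∈ Finset.univ.biUnion x, pr γ g :=
    (Finset.sum_biUnion (fun i _ j _ hij => halloc i j hij)).symm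
  have e3 : ∑ g ∈ Finset.univ.biUnion x, pr γ g ≤ ∑ g, pr γ g :=
    Finset.sum_le_sum_of_subset_of_nonneg (Finset.subset_univ _) (fun g _ _ => hnn g)
  have hw : ∑ g, pr γ g ≤ ∑ i, bids γ i (x i) := by
    rw [sum_pr, ← welfare_xstar γ]; exact hx.2 xstar xstar_alloc
  have e1 := Finset.sum_le_sum hub
  have hsum1 : ∑ i, bids γ i (x i) = ∑ i, ∑ g ∈ x i, pr γ g := by linarith
  have heq : ∀ i ∈ (Finset.univ : Finset (Fin 11)), bids γ i (x i) = ∑ g ∈ x i, pr γ g :=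
    (Finset.sum_eq_sum_iff_of_le hub).1 hsum1
  have hA : Finset.univ.biUnion x = Finset.univ := by
    by_contra hne
    obtain ⟨g, hg⟩ : ∃ g, g ∉ Finset.univ.biUnion x := by
      by_contra h; push_neg at h; exact hne (Finset.eq_univ_iff_forall.2 h)
    have := Finset.sum_lt_sum_of_subset (Finset.subset_univ (Finset.univ.biUnion x))
      (Finset.mem_univ g) hg (hpos g) (fun j _ _ => hnn j)
    linarith
  have hcase : ∀ i : Fin 11, x i = ∅ ∨ (x i = bundleOf i ∧ (i : ℕ) < 6) := by
    intro i
    have h := heq i (Finset.mem_univ i)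
    unfold bids at h
    split at h
    · next hbe =>
      by_cases h6 : (i : ℕ) < 6
      · exact Or.inr ⟨hbe, h6⟩
      · exfalso
        have hs := strict_pr γ h1 i (le_of_not_gt h6)
        rw [h, hbe] at hs
        exact lt_irrefl _ hs
    · next hne =>
      left
      by_contra hx0
      have hne' : (x i).Nonempty := Finset.nonempty_iff_ne_empty.2 hx0
      have hp : 0 < ∑ g ∈ x i, pr γ g := Finset.sum_pos (fun g _ => hpos g) hne'
      rw [← h] at hp
      exact lt_irrefl _ hp
  funext i
  by_cases h6 : (i : ℕ) < 6
  · have hxs : xstar i = {⟨(i : ℕ), h6⟩} := by simp [xstar, h6]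
    rw [hxs]
    have hmem : (⟨(i : ℕ), h6⟩ : Fin 6) ∈ Finset.univ.biUnion x := by
      rw [hA]; exact Finset.mem_univ _
    obtain ⟨j, -, hj⟩ := Finset.mem_biUnion.1 hmem
    rcases hcase j with h0 | ⟨hbj, hj6⟩
    · rw [h0] at hj; exact absurd hj (Finset.notMem_empty _)
    · have hbj' : bundleOf j = {⟨(j : ℕ), hj6⟩} := bundle_lt6 j hj6
      rw [hbj, hbj'] at hj
      have hval : (⟨(i : ℕ), h6⟩ : Fin 6) = ⟨(j : ℕ), hj6⟩ := Finset.mem_singleton.1 hj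
      have hij : i = j := by
        apply Fin.ext
        have := congrArg Fin.val hval
        simpa using this
      have hxx : x i = x j := congrArg x hij
      rw [hxx, hbj, hbj', ← hval]
  · have hxs : xstar i = ∅ := by simp [xstar, h6]
    rw [hxs]
    rcases hcase i with h0 | ⟨_, h6'⟩
    · exact h0
    · exact absurd h6' h6

noncomputable def qr (γ : ℝ) : Fin 6 → ℝ := ![6 - γ, 5, γ, 1, 1, 1]

@[simp] lemma qr_0 (γ : ℝ) : qr γ 0 = 6 - γ := rfl
@[simp] lemma qr_1 (γ : ℝ) : qr γ 1 = 5 := rfl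
@[simp] lemma qr_2 (γ : ℝ) : qr γ 2 = γ := rfl
@[simp] lemma qr_3 (γ : ℝ) : qr γ 3 = 1 := rfl
@[simp] lemma qr_4 (γ : ℝ) : qr γ 4 = 1 := rfl
@[simp] lemma qr_5 (γ : ℝ) : qr γ 5 = 1 := rfl

lemma sum_qr (γ : ℝ) : ∑ g, qr γ g = 14 := by
  rw [Fin.sum_univ_six]; simp; ring

lemma qr_nonneg (γ : ℝ) (h0 : 0 ≤ γ) (h6 : γ ≤ 6) : ∀ g, 0 ≤ qr γ g := by
  intro g; fin_cases g <;> simp <;> linarith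

lemma hb_qr (γ : ℝ) (h1 : 1 ≤ γ) (h6 : γ ≤ 6) :
    ∀ i ∈ Finset.univ.erase (0 : Fin 11), amounts γ i ≤ ∑ g ∈ bundleOf i, qr γ g := by
  intro i hi
  have hne := Finset.ne_of_mem_erase hi
  fin_cases i
  · exact absurd rfl hne
  all_goals simp <;> linarith

def y0 : Fin 11 → Finset (Fin 6) := ![∅, {1}, ∅, {3}, {4}, ∅, ∅, ∅, {0, 2, 5}, ∅, ∅]

lemma y0_alloc : IsAlloc y0 := by
  intro i j hij; fin_cases i <;> fin_cases j <;> revert hij <;> decide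

lemma y0_val (γ : ℝ) : ∑ j ∈ Finset.univ.erase (0 : Fin 11), bids γ j (y0 j) = 14 := by
  have h00 : (fun j => bids γ j (y0 j)) 0 = 0 := by
    show (if (∅ : Finset (Fin 6)) = bundleOf 0 then amounts γ 0 else 0) = 0
    rw [if_neg (by decide)]
  rw [Finset.sum_erase (f := fun j => bids γ j (y0 j)) (a := (0 : Fin 11)) Finset.univ h00]
  simp [bids, y0, amounts, bundleOf, Fin.sum_univ_succ]
  norm_num [show (∅:Finset (Fin 6)) ≠ {0} by decide, show (∅:Finset (Fin 6)) ≠ {2} by decide,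
    show (∅:Finset (Fin 6)) ≠ {5} by decide, show (∅:Finset (Fin 6)) ≠ {0,1,3} by decide,
    show (∅:Finset (Fin 6)) ≠ {1,2,4} by decide, show (∅:Finset (Fin 6)) ≠ {3,4,5} by decide,
    show (∅:Finset (Fin 6)) ≠ {1,2,3} by decide]

lemma sSup_eq (γ : ℝ) (h1 : 1 ≤ γ) (h6 : γ ≤ 6) :
    sSup {w : ℝ | ∃ y, IsAlloc y ∧ w = ∑ j ∈ Finset.univ.erase (0 : Fin 11), bids γ j (y j)}
      = 14 := by
  have hub : ∀ w ∈ {w : ℝ | ∃ y, IsAlloc y ∧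
      w = ∑ j ∈ Finset.univ.erase (0 : Fin 11), bids γ j (y j)}, w ≤ 14 := by
    rintro w ⟨y, hy, rfl⟩
    rw [← sum_qr γ]
    exact key γ (qr γ) (qr_nonneg γ (by linarith) h6) _ (hb_qr γ h1 h6) y hy
  have hmem : (14 : ℝ) ∈ {w : ℝ | ∃ y, IsAlloc y ∧
      w = ∑ j ∈ Finset.univ.erase (0 : Fin 11), bids γ j (y j)} :=
    ⟨y0, y0_alloc, (y0_val γ).symm⟩
  exact le_antisymm (csSup_le ⟨14, hmem⟩ hub) (le_csSup ⟨14, hub⟩ hmem)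

lemma vcg_eq (γ : ℝ) (h1 : 1 ≤ γ) (h6 : γ ≤ 6) :
    vcgPayment (bids γ) xstar 0 = 6 - γ := by
  unfold vcgPayment
  rw [sSup_eq γ h1 h6]
  have h0 : bids γ 0 (xstar 0) = 5 := by rw [xstar_eq]; simp [bids]
  have hadd := Finset.add_sum_erase Finset.univ (fun j => bids γ j (xstar j))
    (Finset.mem_univ (0 : Fin 11))
  rw [welfare_xstar] at hadd
  rw [h0] at hadd
  have : ∑ j ∈ Finset.univ.erase (0 : Fin 11), bids γ j (xstar j) = 8 + γ := by linarith
  rw [this]; ring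


/-- For both γ = 4 and γ = 5, `xstar` is the unique efficient allocation, and
bidder 1's VCG payment is 2 when γ = 4 and 1 when γ = 5; in particular raising
bidder 3's bid from 4 to 5 strictly decreases bidder 1's VCG payment. -/
theorem stmt_5 :
    (Efficient (bids 4) xstar ∧ (∀ x, Efficient (bids 4) x → x = xstar)) ∧
    (Efficient (bids 5) xstar ∧ (∀ x, Efficient (bids 5) x → x = xstar)) ∧
    vcgPayment (bids 4) xstar 0 = 2 ∧ vcgPayment (bids 5) xstar 0 = 1 ∧
    vcgPayment (bids 5) xstar 0 < vcgPayment (bids 4) xstar 0 := by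
  have h4 := vcg_eq 4 (by norm_num) (by norm_num)
  have h5 := vcg_eq 5 (by norm_num) (by norm_num)
  refine ⟨⟨eff 4 (by norm_num), fun x hx => uniq 4 (by norm_num) x hx⟩,
    ⟨eff 5 (by norm_num), fun x hx => uniq 5 (by norm_num) x hx⟩, ?_, ?_, ?_⟩ <;> norm_num [h4, h5]
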